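/- arXiv:1008.1081 — 3 statements merged into one kernel-verified Lean document; each statement's English description precedes it below -/
import Mathlib

section
/- (Abstract Green's formula.) For all u ∈ D(A_max) and v ∈ D(A'_max): ⟨A_max u, v⟩ − ⟨u, A'_max v⟩ = ⟨pr_{Z'}(A_max u), v_{ζ'}⟩ − ⟨u_ζ, pr_Z(A'_max v)⟩. -/
noncomputable section

open Filter Topology

namespace GrubbExt

variable {H : Type*} [NormedAddCommGroup H] [InnerProductSpace ℂ H] [CompleteSpace H]

/-- The inclusion of a closed subspace composed with the orthogonal projection onto it,
as a continuous linear map `H →L[ℂ] H`.  This is `i_K ∘ pr_K` in the notation of the paper. -/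
def projCl (K : Submodule ℂ H) (hK : IsClosed (K : Set H)) : H →L[ℂ] H :=
  haveI : CompleteSpace K := hK.completeSpace_coe
  K.subtypeL.comp (K.orthogonalProjectionOnto)

/-- `R` is the (everywhere defined, bounded) inverse of `P - lam`. -/
structure IsResolvent (P : H →ₗ.[ℂ] H) (lam : ℂ) (R : H →L[ℂ] H) : Prop where
  mem : ∀ f : H, R f ∈ P.domain
  left : ∀ u : P.domain, R (P u - lam • (u : H)) = u
  right : ∀ f : H, P ⟨R f, mem f⟩ - lam • R f = f

/-- `E^λ := I + λ(A_γ - λ)^{-1}`, given the resolvent `R = (A_γ - λ)^{-1}`. -/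
def Eop (lam : ℂ) (R : H →L[ℂ] H) : H →L[ℂ] H := ContinuousLinearMap.id ℂ H + lam • R

/-- `E'^{λ̄} := I + λ̄(A_γ^* - λ̄)^{-1}`, given the resolvent `R' = (A_γ^* - λ̄)^{-1}`. -/
def Eop' (lam : ℂ) (R' : H →L[ℂ] H) : H →L[ℂ] H :=
  ContinuousLinearMap.id ℂ H + (starRingEnd ℂ lam) • R'

/-- The resolvent set of a partially defined operator. -/
def resSet (P : H →ₗ.[ℂ] H) : Set ℂ := {lam | ∃ R : H →L[ℂ] H, IsResolvent P lam R}

/-- The set of "Rayleigh quotients" `Re⟨Pu,u⟩` over unit vectors `u` in the domain of `P`;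
the lower bound `m(P)` is the infimum of this set. -/
def raySet (P : H →ₗ.[ℂ] H) : Set ℝ :=
  {r | ∃ u : P.domain, ‖(u : H)‖ = 1 ∧ r = (inner ℂ (P u) (u : H) : ℂ).re}

/-- The abstract set-up of Grubb's extension theory: a dual pair `A_min, A'_min` of closed
densely defined operators in a Hilbert space `H`, together with a reference operator `A_γ`
lying between `A_min` and `A_max := (A'_min)*`, which is bijective with bounded inverse
(and whose adjoint is likewise bijective with bounded inverse). -/
structure Setup (H : Type*) [NormedAddCommGroup H] [InnerProductSpace ℂ H]
    [CompleteSpace H] where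
  Amin : H →ₗ.[ℂ] H
  Amin' : H →ₗ.[ℂ] H
  closed_Amin : IsClosed (Amin.graph : Set (H × H))
  closed_Amin' : IsClosed (Amin'.graph : Set (H × H))
  dense_Amin : Dense (Amin.domain : Set H)
  dense_Amin' : Dense (Amin'.domain : Set H)
  Amin_le_max : Amin ≤ Amin'.adjoint
  Amin'_le_max' : Amin' ≤ Amin.adjoint
  Agam : H →ₗ.[ℂ] H
  Amin_le_Agam : Amin ≤ Agam
  Agam_le_max : Agam ≤ Amin'.adjoint
  Agaminv : H →L[ℂ] H
  Agaminv_mem : ∀ f : H, Agaminv f ∈ Agam.domain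
  Agaminv_left : ∀ u : Agam.domain, Agaminv (Agam u) = u
  Agaminv_right : ∀ f : H, Agam ⟨Agaminv f, Agaminv_mem f⟩ = f
  Agamstarinv : H →L[ℂ] H
  Agamstarinv_mem : ∀ f : H, Agamstarinv f ∈ Agam.adjoint.domain
  Agamstarinv_left : ∀ v : Agam.adjoint.domain, Agamstarinv (Agam.adjoint v) = v
  Agamstarinv_right : ∀ f : H, Agam.adjoint ⟨Agamstarinv f, Agamstarinv_mem f⟩ = f

namespace Setup

variable (S : Setup H)

/-- `A_max := (A'_min)*`. -/
def Amax : H →ₗ.[ℂ] H := S.Amin'.adjoint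

/-- `A'_max := (A_min)*`. -/
def Amax' : H →ₗ.[ℂ] H := S.Amin.adjoint

/-- `u_ζ := u - A_γ^{-1} A_max u`, the nullspace component of `u ∈ D(A_max)`. -/
def uzeta (u : S.Amax.domain) : H := (u : H) - S.Agaminv (S.Amax u)

/-- `v_{ζ'} := v - (A_γ^*)^{-1} A'_max v`, the nullspace component of `v ∈ D(A'_max)`. -/
def vzeta (v : S.Amax'.domain) : H := (v : H) - S.Agamstarinv (S.Amax' v)

/-- `Z := ker A_max`, as a submodule of `H`. -/
def Zker : Submodule ℂ H := (LinearMap.ker S.Amax.toFun).map S.Amax.domain.subtype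

/-- `Z' := ker A'_max`, as a submodule of `H`. -/
def Zker' : Submodule ℂ H := (LinearMap.ker S.Amax'.toFun).map S.Amax'.domain.subtype

lemma coe_Zker :
    (S.Zker : Set H) = ⋂ v : S.Amin'.domain, {y : H | (inner ℂ y (S.Amin' v) : ℂ) = 0} := by
  ext y
  simp only [Set.mem_iInter, Set.mem_setOf_eq, SetLike.mem_coe, Zker, Submodule.mem_map,
    LinearMap.mem_ker]
  constructor
  · rintro ⟨u, hu, rfl⟩ v
    have h := (LinearPMap.adjoint_isFormalAdjoint S.dense_Amin') u v
    have hu' : S.Amin'.adjoint u = 0 := hu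
    rw [hu'] at h
    simpa using h.symm
  · intro h
    have hmem : y ∈ S.Amax.domain := by
      refine LinearPMap.mem_adjoint_domain_of_exists _ ⟨0, fun x => ?_⟩
      simp [h x]
    refine ⟨⟨y, hmem⟩, ?_, rfl⟩
    exact LinearPMap.adjoint_apply_eq S.dense_Amin' ⟨y, hmem⟩ fun x => by simp [h x]

lemma isClosed_Zker : IsClosed (S.Zker : Set H) := by
  rw [S.coe_Zker]
  exact isClosed_iInter fun v =>
    isClosed_eq (Continuous.inner continuous_id continuous_const) continuous_const

lemma coe_Zker' :
    (S.Zker' : Set H) = ⋂ v : S.Amin.domain, {y : H | (inner ℂ y (S.Amin v) : ℂ) = 0} := by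
  ext y
  simp only [Set.mem_iInter, Set.mem_setOf_eq, SetLike.mem_coe, Zker', Submodule.mem_map,
    LinearMap.mem_ker]
  constructor
  · rintro ⟨u, hu, rfl⟩ v
    have h := (LinearPMap.adjoint_isFormalAdjoint S.dense_Amin) u v
    have hu' : S.Amin.adjoint u = 0 := hu
    rw [hu'] at h
    simpa using h.symm
  · intro h
    have hmem : y ∈ S.Amax'.domain := by
      refine LinearPMap.mem_adjoint_domain_of_exists _ ⟨0, fun x => ?_⟩
      simp [h x]
    refine ⟨⟨y, hmem⟩, ?_, rfl⟩
    exact LinearPMap.adjoint_apply_eq S.dense_Amin ⟨y, hmem⟩ fun x => by simp [h x]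

lemma isClosed_Zker' : IsClosed (S.Zker' : Set H) := by
  rw [S.coe_Zker']
  exact isClosed_iInter fun v =>
    isClosed_eq (Continuous.inner continuous_id continuous_const) continuous_const

/-- The orthogonal projection onto `Z = ker A_max`. -/
def projZ : H →L[ℂ] H := projCl S.Zker S.isClosed_Zker

/-- The orthogonal projection onto `Z' = ker A'_max`. -/
def projZ' : H →L[ℂ] H := projCl S.Zker' S.isClosed_Zker'

variable (At : H →ₗ.[ℂ] H)

/-- `D(T) = {u_ζ : u ∈ D(Ã)}`, the set of nullspace components of elements of `D(Ã)`. -/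
def dzeta : Set H := {x | ∃ u : S.Amax.domain, (u : H) ∈ At.domain ∧ x = S.uzeta u}

/-- `{v_{ζ'} : v ∈ D(Ã*)}`. -/
def dzeta' : Set H := {x | ∃ v : S.Amax'.domain, (v : H) ∈ At.adjoint.domain ∧ x = S.vzeta v}

/-- `V := closure {u_ζ : u ∈ D(Ã)}`. -/
def Vsub : Submodule ℂ H := (Submodule.span ℂ (S.dzeta At)).topologicalClosure

/-- `W := closure {v_{ζ'} : v ∈ D(Ã*)}`. -/
def Wsub : Submodule ℂ H := (Submodule.span ℂ (S.dzeta' At)).topologicalClosure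

lemma isClosed_Vsub : IsClosed ((S.Vsub At : Set H)) :=
  Submodule.isClosed_topologicalClosure _

lemma isClosed_Wsub : IsClosed ((S.Wsub At : Set H)) :=
  Submodule.isClosed_topologicalClosure _

/-- The orthogonal projection onto `V`. -/
def projV : H →L[ℂ] H := projCl (S.Vsub At) (S.isClosed_Vsub At)

/-- The orthogonal projection onto `W`. -/
def projW : H →L[ℂ] H := projCl (S.Wsub At) (S.isClosed_Wsub At)

/-- The set `{(u_ζ, pr_W (A_max u)) : u ∈ D(Ã)}`, for a general closed subspace `W`. -/
def TgraphOn (W : Submodule ℂ H) (hW : IsClosed (W : Set H)) : Set (H × H) :=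
  {p | ∃ u : S.Amax.domain, (u : H) ∈ At.domain ∧ p.1 = S.uzeta u ∧
    p.2 = projCl W hW (S.Amax u)}

/-- The graph of the operator `T : V → W` corresponding to `Ã`. -/
def Tgraph : Set (H × H) := S.TgraphOn At (S.Wsub At) (S.isClosed_Wsub At)


/-- `F^λ := I - λ A_γ^{-1}`. -/
def Fop (lam : ℂ) : H →L[ℂ] H := ContinuousLinearMap.id ℂ H - lam • S.Agaminv

/-- `F'^{λ̄} := I - λ̄ (A_γ^*)^{-1}`. -/
def Fop' (lam : ℂ) : H →L[ℂ] H := ContinuousLinearMap.id ℂ H - (starRingEnd ℂ lam) • S.Agamstarinv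

/-- `Z_λ := ker(A_max - λ)`, as a subset of `H`. -/
def ZkerL (lam : ℂ) : Set H :=
  {x | ∃ hx : x ∈ S.Amax.domain, S.Amax ⟨x, hx⟩ = lam • x}

/-- `Z'_{λ̄} := ker(A'_max - λ̄)`, as a subset of `H`. -/
def ZkerL' (lam : ℂ) : Set H :=
  {x | ∃ hx : x ∈ S.Amax'.domain, S.Amax' ⟨x, hx⟩ = (starRingEnd ℂ lam) • x}

/-- `pr^λ_ζ u := u - (A_γ - λ)^{-1}(A_max - λ)u`, given the resolvent `R = (A_γ - λ)^{-1}`. -/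
def uzetaL (lam : ℂ) (R : H →L[ℂ] H) (u : S.Amax.domain) : H :=
  (u : H) - R (S.Amax u - lam • (u : H))

/-- `pr^{λ̄}_{ζ'} v := v - (A_γ^* - λ̄)^{-1}(A'_max - λ̄)v`,
given the resolvent `R' = (A_γ^* - λ̄)^{-1}`. -/
def vzetaL (lam : ℂ) (R' : H →L[ℂ] H) (v : S.Amax'.domain) : H :=
  (v : H) - R' (S.Amax' v - (starRingEnd ℂ lam) • (v : H))

/-- `D(T^λ) = {pr^λ_ζ u : u ∈ D(Ã)}`. -/
def dzetaL (lam : ℂ) (R : H →L[ℂ] H) : Set H :=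
  {x | ∃ u : S.Amax.domain, (u : H) ∈ At.domain ∧ x = S.uzetaL lam R u}

/-- `{pr^{λ̄}_{ζ'} v : v ∈ D(Ã*)}`. -/
def dzetaL' (lam : ℂ) (R' : H →L[ℂ] H) : Set H :=
  {x | ∃ v : S.Amax'.domain, (v : H) ∈ At.adjoint.domain ∧ x = S.vzetaL lam R' v}

/-- `V_λ := closure {pr^λ_ζ u : u ∈ D(Ã)}`. -/
def VLsub (lam : ℂ) (R : H →L[ℂ] H) : Submodule ℂ H :=
  (Submodule.span ℂ (S.dzetaL At lam R)).topologicalClosure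

/-- `W_{λ̄} := closure {pr^{λ̄}_{ζ'} v : v ∈ D(Ã*)}`. -/
def WLsub (lam : ℂ) (R' : H →L[ℂ] H) : Submodule ℂ H :=
  (Submodule.span ℂ (S.dzetaL' At lam R')).topologicalClosure

lemma isClosed_WLsub (lam : ℂ) (R' : H →L[ℂ] H) : IsClosed ((S.WLsub At lam R' : Set H)) :=
  Submodule.isClosed_topologicalClosure _

/-- The orthogonal projection onto `W_{λ̄}`. -/
def projWL (lam : ℂ) (R' : H →L[ℂ] H) : H →L[ℂ] H :=
  projCl (S.WLsub At lam R') (S.isClosed_WLsub At lam R')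

/-- The graph of the operator `T^λ : V_λ → W_{λ̄}` corresponding to `Ã - λ`:
`{(pr^λ_ζ u, pr_{W_{λ̄}}((A_max - λ)u)) : u ∈ D(Ã)}`. -/
def TgraphL (lam : ℂ) (R R' : H →L[ℂ] H) : Set (H × H) :=
  {p | ∃ u : S.Amax.domain, (u : H) ∈ At.domain ∧ p.1 = S.uzetaL lam R u ∧
    p.2 = S.projWL At lam R' (S.Amax u - lam • (u : H))}

/-- `G^λ_{V,W} x := -pr_W (λ E^λ x)`, where `W = W(Ã)`. -/
def Gval (lam : ℂ) (R : H →L[ℂ] H) (x : H) : H :=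
  -(S.projW At (lam • Eop lam R x))

/-- `G^μ_{Z,Z} z := -pr_Z (μ E^μ z)`. -/
def GZval (lam : ℂ) (R : H →L[ℂ] H) (x : H) : H :=
  -(S.projZ (lam • Eop lam R x))

lemma mem_Amax_res {lam : ℂ} {Rt : H →L[ℂ] H} (h2 : At ≤ S.Amax)
    (hRt : IsResolvent At lam Rt) (w : H) :
    S.Agaminv w - Rt (w - lam • S.Agaminv w) ∈ S.Amax.domain :=
  Submodule.sub_mem _ (S.Agam_le_max.1 (S.Agaminv_mem w)) (h2.1 (hRt.mem _))

/-- `M(λ) w := pr_ζ ((I - (Ã - λ)^{-1}(A_max - λ)) A_γ^{-1} w)`, the value of the abstract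
`M`-function on `w`. -/
def Mval {lam : ℂ} {Rt : H →L[ℂ] H} (h2 : At ≤ S.Amax) (hRt : IsResolvent At lam Rt)
    (w : H) : H :=
  S.uzeta ⟨S.Agaminv w - Rt (w - lam • S.Agaminv w), S.mem_Amax_res At h2 hRt w⟩


end Setup

end GrubbExt

/-! Write `f = A_max u`, `g = A'_max v`, `u = A_γ⁻¹ f + u_ζ` and `v = (A_γ^*)⁻¹ g + v_ζ'`.
Since `A_γ⁻¹` and `(A_γ^*)⁻¹` are adjoint to each other, the γ-parts contribute the same term
`⟨A_γ⁻¹ f, g⟩` to `⟨f, v⟩` and to `⟨u, g⟩`. What remains is `⟨f, v_ζ'⟩ - ⟨u_ζ, g⟩`, and as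
`v_ζ' ∈ Z'` and `u_ζ ∈ Z`, inserting the projections onto `Z'` and `Z` changes nothing. -/

namespace LinearPMap

section RightInverse

variable {R E F : Type*} [Ring R] [AddCommGroup E] [Module R E] [AddCommGroup F] [Module R F]

theorem apply_rightInverse_of_le {P T : E →ₗ.[R] F} (hPT : P ≤ T)
    {Q : F → E} (hQ_mem : ∀ f, Q f ∈ P.domain) (hQ : ∀ f, P ⟨Q f, hQ_mem f⟩ = f) (f : F) :
    T ⟨Q f, hPT.1 (hQ_mem f)⟩ = f :=
  (hPT.2 rfl).symm.trans (hQ f)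

theorem sub_rightInverse_mem_ker {P T : E →ₗ.[R] F} (hPT : P ≤ T)
    {Q : F → E} (hQ_mem : ∀ f, Q f ∈ P.domain) (hQ : ∀ f, P ⟨Q f, hQ_mem f⟩ = f)
    (u : T.domain) :
    (u : E) - Q (T u) ∈ (LinearMap.ker T.toFun).map T.domain.subtype := by
  refine ⟨u - ⟨Q (T u), hPT.1 (hQ_mem _)⟩, ?_, rfl⟩
  change T (u - _) = 0
  rw [map_sub, apply_rightInverse_of_le hPT hQ_mem hQ, sub_self]

end RightInverse

section Adjoint

variable {𝕜 E F : Type*} [RCLike 𝕜] [NormedAddCommGroup E] [InnerProductSpace 𝕜 E]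
  [NormedAddCommGroup F] [InnerProductSpace 𝕜 F] [CompleteSpace E]

theorem adjoint_le_adjoint_of_le {T S : E →ₗ.[𝕜] F}
    (hT : Dense (T.domain : Set E)) (hTS : T ≤ S) : S.adjoint ≤ T.adjoint := by
  have h : S.adjoint.IsFormalAdjoint T := fun x y => by
    rw [(adjoint_isFormalAdjoint (hT.mono hTS.1)) x ⟨y, hTS.1 y.2⟩,
      hTS.2 (x := y) (y := ⟨y, hTS.1 y.2⟩) rfl]
  exact h.symm.le_adjoint hT

theorem inner_rightInverse_adjoint {P : E →ₗ.[𝕜] F}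
    (hP : Dense (P.domain : Set E))
    {Q : F → E} (hQ_mem : ∀ f, Q f ∈ P.domain) (hQ : ∀ f, P ⟨Q f, hQ_mem f⟩ = f)
    {Q' : E → F} (hQ'_mem : ∀ g, Q' g ∈ P.adjoint.domain)
    (hQ' : ∀ g, P.adjoint ⟨Q' g, hQ'_mem g⟩ = g) (f : F) (g : E) :
    inner 𝕜 f (Q' g) = inner 𝕜 (Q f) g := by
  have h := adjoint_isFormalAdjoint hP ⟨Q' g, hQ'_mem g⟩ ⟨Q f, hQ_mem f⟩
  rw [hQ' g, hQ f] at h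
  rw [← inner_conj_symm, ← h, inner_conj_symm]

end Adjoint

end LinearPMap

namespace GrubbExt

variable {H : Type*} [NormedAddCommGroup H] [InnerProductSpace ℂ H] [CompleteSpace H]

theorem inner_projCl_of_mem_right {K : Submodule ℂ H} (hK : IsClosed (K : Set H)) {x : H}
    (hx : x ∈ K) (y : H) : inner ℂ (projCl K hK y) x = inner ℂ y x :=
  haveI : CompleteSpace K := hK.completeSpace_coe
  K.inner_orthogonalProjectionOnto_eq_of_mem_right ⟨x, hx⟩ y

theorem inner_projCl_of_mem_left {K : Submodule ℂ H} (hK : IsClosed (K : Set H)) {x : H}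
    (hx : x ∈ K) (y : H) : inner ℂ x (projCl K hK y) = inner ℂ x y :=
  haveI : CompleteSpace K := hK.completeSpace_coe
  K.inner_orthogonalProjectionOnto_eq_of_mem_left ⟨x, hx⟩ y

namespace Setup

variable (S : Setup H)

theorem adjoint_Agam_le_Amax' : S.Agam.adjoint ≤ S.Amax' :=
  LinearPMap.adjoint_le_adjoint_of_le S.dense_Amin S.Amin_le_Agam

theorem uzeta_mem_Zker (u : S.Amax.domain) : S.uzeta u ∈ S.Zker :=
  LinearPMap.sub_rightInverse_mem_ker S.Agam_le_max S.Agaminv_mem S.Agaminv_right u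

theorem vzeta_mem_Zker' (v : S.Amax'.domain) : S.vzeta v ∈ S.Zker' :=
  LinearPMap.sub_rightInverse_mem_ker S.adjoint_Agam_le_Amax' S.Agamstarinv_mem
    S.Agamstarinv_right v

theorem inner_Agamstarinv (f g : H) :
    inner ℂ f (S.Agamstarinv g) = inner ℂ (S.Agaminv f) g :=
  LinearPMap.inner_rightInverse_adjoint (S.dense_Amin.mono S.Amin_le_Agam.1)
    S.Agaminv_mem S.Agaminv_right S.Agamstarinv_mem S.Agamstarinv_right f g

end Setup

theorem statement_1 (S : Setup H) :
    ∀ (u : S.Amax.domain) (v : S.Amax'.domain),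
      (inner ℂ (S.Amax u) (v : H) : ℂ) - (inner ℂ (u : H) (S.Amax' v) : ℂ) =
        (inner ℂ (S.projZ' (S.Amax u)) (S.vzeta v) : ℂ) -
          (inner ℂ (S.uzeta u) (S.projZ (S.Amax' v)) : ℂ) := by
  intro u v
  have hu : (u : H) = S.Agaminv (S.Amax u) + S.uzeta u := (add_sub_cancel _ _).symm
  have hv : (v : H) = S.Agamstarinv (S.Amax' v) + S.vzeta v := (add_sub_cancel _ _).symm
  rw [Setup.projZ', Setup.projZ, inner_projCl_of_mem_right _ (S.vzeta_mem_Zker' v),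
    inner_projCl_of_mem_left _ (S.uzeta_mem_Zker u), hu, hv, inner_add_left, inner_add_right,
    S.inner_Agamstarinv]
  ring

end GrubbExt
end
end

section
/- (Corollary 5.2, Kreĭn-type resolvent formula.) Let Ã ∈ M be closed and let λ ∈ ρ(Ã) ∩ ρ(A_γ), where ρ(Ã) := {λ ∈ ℂ : Ã − λ : D(Ã) → H is bijective with bounded inverse}. Then T^λ : D(T^λ) → W_{λ̄} is bijective and (Ã − λ)^{-1} = (A_γ − λ)^{-1} + i_{V_λ} ∘ (T^λ)^{-1} ∘ pr_{W_{λ̄}} as operators on H. -/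
/-!
For `f ∈ H`, `u := (Ã - λ)⁻¹ f` lies in `D(Ã)` with `(A_max - λ) u = f`, so
`pr^λ_ζ u = (Ã - λ)⁻¹ f - (A_γ - λ)⁻¹ f` and `T^λ` maps it to `pr_{W_{λ̄}} f`; this is the
resolvent formula, and it makes `T^λ` onto `W_{λ̄}`. Every point of the graph of `T^λ` has this
form, so injectivity amounts to `(Ã - λ)⁻¹ - (A_γ - λ)⁻¹` vanishing on `W_{λ̄}ᗮ`. Since the
adjoint of the resolvent of a densely defined operator at `λ` is the resolvent of its adjoint at
`λ̄`, the adjoint of this difference sends `g` to `pr^{λ̄}_{ζ'} ((Ã* - λ̄)⁻¹ g) ∈ W_{λ̄}`.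
-/

noncomputable section

open Filter Topology

namespace GrubbExt

variable {H : Type*} [NormedAddCommGroup H] [InnerProductSpace ℂ H] [CompleteSpace H]

open scoped InnerProductSpace

lemma projCl_eq_self_of_mem (K : Submodule ℂ H) (hK : IsClosed (K : Set H)) {x : H}
    (hx : x ∈ K) : projCl K hK x = x :=
  haveI : CompleteSpace K := hK.completeSpace_coe
  K.starProjection_eq_self_iff.mpr hx

lemma sub_projCl_mem_orthogonal (K : Submodule ℂ H) (hK : IsClosed (K : Set H)) (x : H) :
    x - projCl K hK x ∈ Kᗮ :=
  haveI : CompleteSpace K := hK.completeSpace_coe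
  K.sub_starProjection_mem_orthogonal x

namespace IsResolvent

section

variable {E : Type*} [NormedAddCommGroup E] [InnerProductSpace ℂ E]
  {P Q : E →ₗ.[ℂ] E} {lam : ℂ} {R R₂ : E →L[ℂ] E}

lemma unique (hR : IsResolvent P lam R) (hR₂ : IsResolvent P lam R₂) : R = R₂ := by
  ext f
  conv_lhs => rw [← hR₂.right f]
  exact hR.left _

lemma left_of_le (hR : IsResolvent P lam R) (hPQ : P ≤ Q) (u : Q.domain)
    (hu : (u : E) ∈ P.domain) : R (Q u - lam • (u : E)) = u := by
  have hPu : P ⟨u, hu⟩ = Q u := hPQ.2 rfl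
  rw [← hPu]
  exact hR.left ⟨u, hu⟩

lemma right_of_le (hR : IsResolvent P lam R) (hPQ : P ≤ Q) (f : E) :
    Q ⟨R f, hPQ.1 (hR.mem f)⟩ - lam • R f = f := by
  have hQRf : Q ⟨R f, hPQ.1 (hR.mem f)⟩ = P ⟨R f, hR.mem f⟩ := (hPQ.2 rfl).symm
  rw [hQRf]
  exact hR.right f

end

lemma adjoint {P : H →ₗ.[ℂ] H} {lam : ℂ} {R : H →L[ℂ] H} (hP : Dense (P.domain : Set H))
    (hR : IsResolvent P lam R) :
    IsResolvent P.adjoint (starRingEnd ℂ lam) (ContinuousLinearMap.adjoint R) := by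
  set R' := ContinuousLinearMap.adjoint R
  have hformal : ∀ (g : H) (x : P.domain),
      ⟪g + starRingEnd ℂ lam • R' g, (x : H)⟫_ℂ = ⟪R' g, P x⟫_ℂ := by
    intro g x
    have hx : ⟪R' g, P x - lam • (x : H)⟫_ℂ = ⟪g, (x : H)⟫_ℂ := by
      rw [ContinuousLinearMap.adjoint_inner_left, hR.left]
    rw [inner_sub_right, inner_smul_right] at hx
    rw [inner_add_left, inner_smul_left, ← hx]
    simp
  refine ⟨fun g => LinearPMap.mem_adjoint_domain_of_exists _ ⟨_, hformal g⟩,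
    fun v => ext_inner_right ℂ fun x => ?_, fun g => ?_⟩
  · have hRx := LinearPMap.adjoint_isFormalAdjoint hP v ⟨R x, hR.mem x⟩
    rw [ContinuousLinearMap.adjoint_inner_left, inner_sub_left, hRx, inner_smul_left,
      Complex.conj_conj, ← inner_smul_right, ← inner_sub_right, hR.right x]
  · rw [LinearPMap.adjoint_apply_eq hP _ (hformal g)]
    abel

end IsResolvent

lemma adjoint_le_adjoint_of_le {P Q : H →ₗ.[ℂ] H} (hP : Dense (P.domain : Set H))
    (h : P ≤ Q) : Q.adjoint ≤ P.adjoint := by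
  refine LinearPMap.IsFormalAdjoint.le_adjoint hP fun x y => ?_
  have hQx : Q ⟨x, h.1 x.2⟩ = P x := (h.2 rfl).symm
  rw [← hQx, ← inner_conj_symm,
    ← LinearPMap.adjoint_isFormalAdjoint (hP.mono h.1) y ⟨x, h.1 x.2⟩, inner_conj_symm]

namespace Setup

variable {S : Setup H} {At : H →ₗ.[ℂ] H} {lam : ℂ} {Rg RAt R' : H →L[ℂ] H}

lemma resolvent_sub_mem_TgraphL (h2 : At ≤ S.Amax) (hRAt : IsResolvent At lam RAt) (f : H) :
    (RAt f - Rg f, S.projWL At lam R' f) ∈ S.TgraphL At lam Rg R' := by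
  have hf := hRAt.right_of_le h2 f
  exact ⟨⟨RAt f, _⟩, hRAt.mem f, by rw [uzetaL, hf], by rw [hf]⟩

lemma exists_resolvent_sub_of_mem_TgraphL (h2 : At ≤ S.Amax) (hRAt : IsResolvent At lam RAt)
    {x w : H} (hxw : (x, w) ∈ S.TgraphL At lam Rg R') :
    ∃ f, x = RAt f - Rg f ∧ w = S.projWL At lam R' f := by
  obtain ⟨u, hu, hx, hw⟩ := hxw
  refine ⟨S.Amax u - lam • (u : H), ?_, hw⟩
  rw [hRAt.left_of_le h2 u hu]
  exact hx

lemma adjoint_resolvent_sub_mem_WLsub (h1 : S.Amin ≤ At) (hRAt : IsResolvent At lam RAt)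
    (g : H) : ContinuousLinearMap.adjoint RAt g - R' g ∈ S.WLsub At lam R' := by
  have hadj := hRAt.adjoint (S.dense_Amin.mono h1.1)
  have hle : At.adjoint ≤ S.Amax' := adjoint_le_adjoint_of_le S.dense_Amin h1
  have hv : S.vzetaL lam R' ⟨_, hle.1 (hadj.mem g)⟩ =
      ContinuousLinearMap.adjoint RAt g - R' g := by
    rw [vzetaL, hadj.right_of_le hle g]
  rw [← hv]
  exact Submodule.le_topologicalClosure _ (Submodule.subset_span ⟨_, hadj.mem g, rfl⟩)

lemma resolvent_sub_projWL (h1 : S.Amin ≤ At) (hRg : IsResolvent S.Agam lam Rg)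
    (hRAt : IsResolvent At lam RAt) (hR' : IsResolvent S.Agam.adjoint (starRingEnd ℂ lam) R')
    (f : H) :
    RAt (S.projWL At lam R' f) - Rg (S.projWL At lam R' f) = RAt f - Rg f := by
  have hR'_eq : ContinuousLinearMap.adjoint Rg = R' :=
    (hRg.adjoint (S.dense_Amin.mono S.Amin_le_Agam.1)).unique hR'
  have horth := sub_projCl_mem_orthogonal _ (S.isClosed_WLsub At lam R') f
  have hzero : RAt (f - S.projWL At lam R' f) - Rg (f - S.projWL At lam R' f) = 0 := by
    refine ext_inner_left ℂ fun g => ?_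
    rw [inner_zero_right, inner_sub_right, ← ContinuousLinearMap.adjoint_inner_left,
      ← ContinuousLinearMap.adjoint_inner_left Rg, hR'_eq, ← inner_sub_left]
    exact (Submodule.mem_orthogonal _ _).mp horth _ (adjoint_resolvent_sub_mem_WLsub h1 hRAt g)
  rw [map_sub, map_sub, sub_sub_sub_comm, sub_eq_zero] at hzero
  exact hzero.symm

end Setup

theorem statement_10_general (S : Setup H) (At : H →ₗ.[ℂ] H)
    (h1 : S.Amin ≤ At) (h2 : At ≤ S.Amax)
    (lam : ℂ) (Rg RAt R' : H →L[ℂ] H)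
    (hRg : IsResolvent S.Agam lam Rg) (hRAt : IsResolvent At lam RAt)
    (hR' : IsResolvent S.Agam.adjoint (starRingEnd ℂ lam) R') :
    (∀ w : H, w ∈ S.WLsub At lam R' →
      ∃! x : H, (x, w) ∈ S.TgraphL At lam Rg R') ∧
    ∀ f : H, (RAt f - Rg f, S.projWL At lam R' f) ∈ S.TgraphL At lam Rg R' := by
  refine ⟨fun w hw => ⟨RAt w - Rg w, ?_, fun x hxw => ?_⟩,
    Setup.resolvent_sub_mem_TgraphL h2 hRAt⟩
  · have hpw : S.projWL At lam R' w = w := projCl_eq_self_of_mem _ _ hw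
    simpa only [hpw] using Setup.resolvent_sub_mem_TgraphL (Rg := Rg) (R' := R') h2 hRAt w
  · obtain ⟨f, rfl, rfl⟩ := Setup.exists_resolvent_sub_of_mem_TgraphL h2 hRAt hxw
    exact (Setup.resolvent_sub_projWL h1 hRg hRAt hR' f).symm

theorem statement_10 (S : Setup H) (At : H →ₗ.[ℂ] H)
    (h1 : S.Amin ≤ At) (h2 : At ≤ S.Amax)
    (hcl : IsClosed (At.graph : Set (H × H)))
    (lam : ℂ) (Rg RAt R' : H →L[ℂ] H)
    (hRg : IsResolvent S.Agam lam Rg) (hRAt : IsResolvent At lam RAt)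
    (hR' : IsResolvent S.Agam.adjoint (starRingEnd ℂ lam) R') :
    (∀ w : H, w ∈ S.WLsub At lam R' →
      ∃! x : H, (x, w) ∈ S.TgraphL At lam Rg R') ∧
    ∀ f : H, (RAt f - Rg f, S.projWL At lam R' f) ∈ S.TgraphL At lam Rg R' :=
  statement_10_general S At h1 h2 lam Rg RAt R' hRg hRAt hR'

end GrubbExt
end
end

section
/- (Theorem 5.3.) Let Ã ∈ M be closed, corresponding to T : V → W, and let λ ∈ ρ(A_γ). Then E^λ restricts to a bounded bijection E^λ_V : V → V_λ and E'^{λ̄} restricts to a bounded bijection E'^{λ̄}_W : W → W_{λ̄}; moreover D(T^λ) = E^λ_V(D(T)), and for every z ∈ D(T): (E'^{λ̄}_W)* (T^λ (E^λ_V z)) = T z + G^λ_{V,W} z, where (E'^{λ̄}_W)* : W_{λ̄} → W is the Hilbert-space adjoint of E'^{λ̄}_W : W → W_{λ̄}. -/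
/-!
With `B = A_γ⁻¹` and `R = (A_γ - λ)⁻¹`, the first resolvent identity `R - B = λ R B = λ B R`
shows that `E^λ = I + λ R` is inverted by `I - λ B` and that `pr^λ_ζ u = E^λ u_ζ`. So `E^λ` maps
`D(T)` onto `D(T^λ)` and, being a homeomorphism, `V` onto `V_λ`; likewise `E'^{λ̄}` maps `W` onto
`W_{λ̄}`. As `(A_γ^* - λ̄)⁻¹ = R^*`, the operator `E'^{λ̄}` is the adjoint of `E^λ`, so
`(E'^{λ̄}_W)^* T^λ E^λ z = pr_W E^λ (A_max - λ) u` for `z = u_ζ`, and the same identity gives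
`E^λ (A_max - λ) u = A_max u - λ E^λ u_ζ`.
-/

noncomputable section

open Filter Topology

namespace GrubbExt

variable {H : Type*} [NormedAddCommGroup H] [InnerProductSpace ℂ H] [CompleteSpace H]

theorem _root_.ContinuousLinearEquiv.bijOn_topologicalClosure_span {𝕜 E F : Type*} [Semiring 𝕜]
    [TopologicalSpace E] [AddCommMonoid E] [Module 𝕜 E] [ContinuousAdd E]
    [ContinuousConstSMul 𝕜 E] [TopologicalSpace F] [AddCommMonoid F] [Module 𝕜 F]
    [ContinuousAdd F] [ContinuousConstSMul 𝕜 F] (e : E ≃L[𝕜] F) (s : Set E) :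
    Set.BijOn e ((Submodule.span 𝕜 s).topologicalClosure : Set E)
      ((Submodule.span 𝕜 (e '' s)).topologicalClosure : Set F) := by
  have himage : e '' ((Submodule.span 𝕜 s).topologicalClosure : Set E)
      = ((Submodule.span 𝕜 (e '' s)).topologicalClosure : Set F) := by
    rw [Submodule.topologicalClosure_coe, Submodule.topologicalClosure_coe, e.image_closure,
      show (e : E → F) = e.toLinearEquiv.toLinearMap from rfl, ← Submodule.map_coe,
      ← Submodule.span_image]
  exact himage ▸ e.injective.injOn.bijOn_image

section Projection

variable {K : Submodule ℂ H}

theorem inner_projCl_left (hK : IsClosed (K : Set H)) (x : H) {w : H} (hw : w ∈ K) :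
    inner ℂ (projCl K hK x) w = inner ℂ x w := by
  have : CompleteSpace K := hK.completeSpace_coe
  rw [← sub_eq_zero, ← inner_sub_left, ← neg_sub, inner_neg_left,
    show projCl K hK x = K.starProjection x from rfl, K.starProjection_inner_eq_zero x w hw,
    neg_zero]

theorem projCl_eq_of_mem_of_inner_eq_zero (hK : IsClosed (K : Set H)) {x r : H} (hr : r ∈ K)
    (horth : ∀ w ∈ K, inner ℂ (x - r) w = 0) : projCl K hK x = r := by
  have : CompleteSpace K := hK.completeSpace_coe
  exact K.eq_starProjection_of_mem_of_inner_eq_zero hr horth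

end Projection

namespace IsResolvent

variable {E : Type*} [NormedAddCommGroup E] [InnerProductSpace ℂ E]
  {P : E →ₗ.[ℂ] E} {μ ν : ℂ} {B R : E →L[ℂ] E}

theorem first_resolvent_identity (hR : IsResolvent P μ R) (hB : IsResolvent P ν B) (f : E) :
    R f - B f = (μ - ν) • R (B f) := by
  have hPB : P ⟨B f, hB.mem f⟩ - μ • B f = f - (μ - ν) • B f := by
    linear_combination (norm := module) hB.right f
  have h := hR.left ⟨B f, hB.mem f⟩
  rw [hPB, map_sub, map_smul] at h
  linear_combination (norm := module) h

theorem first_resolvent_identity' (hR : IsResolvent P μ R) (hB : IsResolvent P ν B) (f : E) :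
    R f - B f = (μ - ν) • B (R f) := by
  have hPR : P ⟨R f, hR.mem f⟩ - ν • R f = f + (μ - ν) • R f := by
    linear_combination (norm := module) hR.right f
  have h := hB.left ⟨R f, hR.mem f⟩
  rw [hPR, map_add, map_smul] at h
  linear_combination (norm := module) -h

def eopEquiv (hR : IsResolvent P μ R) (hB : IsResolvent P 0 B) : E ≃L[ℂ] E :=
  ContinuousLinearEquiv.equivOfInverse (Eop μ R) (ContinuousLinearMap.id ℂ E - μ • B)
    (fun f => by
      simp only [Eop, sub_apply, add_apply, smul_apply, ContinuousLinearMap.id_apply, map_add,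
        map_smul]
      linear_combination (norm := module) μ • hR.first_resolvent_identity' hB f)
    (fun f => by
      simp only [Eop, sub_apply, add_apply, smul_apply, ContinuousLinearMap.id_apply, map_sub,
        map_smul]
      linear_combination (norm := module) μ • hR.first_resolvent_identity hB f)

theorem sub_apply_sub_smul (hR : IsResolvent P μ R) (hB : IsResolvent P 0 B) (x g : E) :
    x - R (g - μ • x) = Eop μ R (x - B g) := by
  simp only [Eop, add_apply, smul_apply, ContinuousLinearMap.id_apply, map_sub, map_smul]
  linear_combination (norm := module) -hR.first_resolvent_identity hB g

theorem Eop_sub_smul (hR : IsResolvent P μ R) (hB : IsResolvent P 0 B) (x g : E) :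
    Eop μ R (g - μ • x) = g - μ • Eop μ R (x - B g) := by
  rw [← hR.sub_apply_sub_smul hB]
  simp only [Eop, add_apply, smul_apply, ContinuousLinearMap.id_apply]
  module

theorem inner_apply_left [CompleteSpace E] {R' : E →L[ℂ] E} (hP : Dense (P.domain : Set E))
    (hR : IsResolvent P μ R) (hR' : IsResolvent P.adjoint (starRingEnd ℂ μ) R') (x w : E) :
    inner ℂ (R x) w = inner ℂ x (R' w) := by
  have hPR : P ⟨R x, hR.mem x⟩ = x + μ • R x := sub_eq_iff_eq_add.mp (hR.right x)
  have hPR' : P.adjoint ⟨R' w, hR'.mem w⟩ = w + starRingEnd ℂ μ • R' w :=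
    sub_eq_iff_eq_add.mp (hR'.right w)
  have h := LinearPMap.adjoint_isFormalAdjoint hP ⟨R' w, hR'.mem w⟩ ⟨R x, hR.mem x⟩
  rw [hPR, hPR'] at h
  simp only [inner_add_left, inner_add_right, inner_smul_left, inner_smul_right,
    starRingEnd_self_apply, add_left_inj] at h
  rw [← inner_conj_symm, h, inner_conj_symm]

theorem inner_Eop_left [CompleteSpace E] {R' : E →L[ℂ] E} (hP : Dense (P.domain : Set E))
    (hR : IsResolvent P μ R) (hR' : IsResolvent P.adjoint (starRingEnd ℂ μ) R') (x w : E) :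
    inner ℂ (Eop μ R x) w = inner ℂ x (Eop' μ R' w) := by
  simp only [Eop, Eop', add_apply, smul_apply, ContinuousLinearMap.id_apply, inner_add_left,
    inner_add_right, inner_smul_left, inner_smul_right, hR.inner_apply_left hP hR' x w]

end IsResolvent

namespace Setup

variable (S : Setup H)

theorem isResolvent_Agaminv : IsResolvent S.Agam 0 S.Agaminv where
  mem := S.Agaminv_mem
  left u := by simpa using S.Agaminv_left u
  right f := by simpa using S.Agaminv_right f

theorem isResolvent_Agamstarinv : IsResolvent S.Agam.adjoint 0 S.Agamstarinv where
  mem := S.Agamstarinv_mem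
  left v := by simpa using S.Agamstarinv_left v
  right f := by simpa using S.Agamstarinv_right f

theorem dense_Agam_domain : Dense (S.Agam.domain : Set H) :=
  S.dense_Amin.mono S.Amin_le_Agam.1

variable {S} {lam : ℂ} {Rg R' : H →L[ℂ] H}

theorem uzetaL_eq_Eop_uzeta (hRg : IsResolvent S.Agam lam Rg) (u : S.Amax.domain) :
    S.uzetaL lam Rg u = Eop lam Rg (S.uzeta u) :=
  hRg.sub_apply_sub_smul S.isResolvent_Agaminv u (S.Amax u)

theorem vzetaL_eq_Eop'_vzeta (hR' : IsResolvent S.Agam.adjoint (starRingEnd ℂ lam) R')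
    (v : S.Amax'.domain) : S.vzetaL lam R' v = Eop' lam R' (S.vzeta v) :=
  hR'.sub_apply_sub_smul S.isResolvent_Agamstarinv v (S.Amax' v)

theorem Eop_Amax_sub_smul (hRg : IsResolvent S.Agam lam Rg) (u : S.Amax.domain) :
    Eop lam Rg (S.Amax u - lam • (u : H)) = S.Amax u - lam • Eop lam Rg (S.uzeta u) :=
  hRg.Eop_sub_smul S.isResolvent_Agaminv u (S.Amax u)

variable (At : H →ₗ.[ℂ] H)

theorem dzetaL_eq_image (hRg : IsResolvent S.Agam lam Rg) :
    S.dzetaL At lam Rg = Eop lam Rg '' S.dzeta At := by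
  ext x
  constructor
  · rintro ⟨u, hu, rfl⟩
    exact ⟨S.uzeta u, ⟨u, hu, rfl⟩, (uzetaL_eq_Eop_uzeta hRg u).symm⟩
  · rintro ⟨_, ⟨u, hu, rfl⟩, rfl⟩
    exact ⟨u, hu, (uzetaL_eq_Eop_uzeta hRg u).symm⟩

theorem dzetaL'_eq_image (hR' : IsResolvent S.Agam.adjoint (starRingEnd ℂ lam) R') :
    S.dzetaL' At lam R' = Eop' lam R' '' S.dzeta' At := by
  ext x
  constructor
  · rintro ⟨v, hv, rfl⟩
    exact ⟨S.vzeta v, ⟨v, hv, rfl⟩, (vzetaL_eq_Eop'_vzeta hR' v).symm⟩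
  · rintro ⟨_, ⟨v, hv, rfl⟩, rfl⟩
    exact ⟨v, hv, (vzetaL_eq_Eop'_vzeta hR' v).symm⟩

theorem bijOn_Eop_Vsub (hRg : IsResolvent S.Agam lam Rg) :
    Set.BijOn (Eop lam Rg) (S.Vsub At) (S.VLsub At lam Rg) := by
  rw [VLsub, dzetaL_eq_image At hRg]
  exact (hRg.eopEquiv S.isResolvent_Agaminv).bijOn_topologicalClosure_span _

theorem bijOn_Eop'_Wsub (hR' : IsResolvent S.Agam.adjoint (starRingEnd ℂ lam) R') :
    Set.BijOn (Eop' lam R') (S.Wsub At) (S.WLsub At lam R') := by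
  rw [WLsub, dzetaL'_eq_image At hR']
  exact (hR'.eopEquiv S.isResolvent_Agamstarinv).bijOn_topologicalClosure_span _

theorem projW_Amax_eq_of_uzeta_eq {T : H →ₗ.[ℂ] H}
    (hT : (T.graph : Set (H × H)) = S.Tgraph At) {u u' : S.Amax.domain}
    (hu : (u : H) ∈ At.domain) (hu' : (u' : H) ∈ At.domain) (h : S.uzeta u = S.uzeta u') :
    S.projW At (S.Amax u) = S.projW At (S.Amax u') := by
  refine T.mem_graph_snd_inj ?_ ?_ h <;> rw [← SetLike.mem_coe, hT]
  exacts [⟨u, hu, rfl, rfl⟩, ⟨u', hu', rfl, rfl⟩]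

/-- `(E'^{λ̄}_W)^* ∘ pr_{W_{λ̄}} = pr_W ∘ E^λ`, with the adjoint given by its defining property. -/
theorem eq_projW_Eop_of_inner_eq (hRg : IsResolvent S.Agam lam Rg)
    (hR' : IsResolvent S.Agam.adjoint (starRingEnd ℂ lam) R') {g y r : H}
    (hy : y = S.projWL At lam R' g) (hrW : r ∈ S.Wsub At)
    (hr : ∀ w ∈ S.Wsub At, inner ℂ r w = inner ℂ y (Eop' lam R' w)) :
    r = S.projW At (Eop lam Rg g) := by
  refine (projCl_eq_of_mem_of_inner_eq_zero _ hrW fun w hw => ?_).symm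
  have hEw : Eop' lam R' w ∈ S.WLsub At lam R' := (S.bijOn_Eop'_Wsub At hR').mapsTo hw
  rw [inner_sub_left, hr w hw, hy, projWL, inner_projCl_left _ _ hEw,
    hRg.inner_Eop_left S.dense_Agam_domain hR', sub_self]

end Setup

theorem statement_12_general (S : Setup H) (At : H →ₗ.[ℂ] H)
    (T : H →ₗ.[ℂ] H) (hT : (T.graph : Set (H × H)) = S.Tgraph At)
    (lam : ℂ) (Rg R' : H →L[ℂ] H)
    (hRg : IsResolvent S.Agam lam Rg)
    (hR' : IsResolvent S.Agam.adjoint (starRingEnd ℂ lam) R') :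
    Set.BijOn (Eop lam Rg) (S.Vsub At : Set H) (S.VLsub At lam Rg : Set H) ∧
    Set.BijOn (Eop' lam R') (S.Wsub At : Set H) (S.WLsub At lam R' : Set H) ∧
    S.dzetaL At lam Rg = Eop lam Rg '' S.dzeta At ∧
    ∀ u : S.Amax.domain, (u : H) ∈ At.domain →
      ∀ y r : H, (Eop lam Rg (S.uzeta u), y) ∈ S.TgraphL At lam Rg R' →
        r ∈ S.Wsub At →
        (∀ w : H, w ∈ S.Wsub At →
          (inner ℂ r w : ℂ) = (inner ℂ y (Eop' lam R' w) : ℂ)) →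
        r = S.projW At (S.Amax u) + S.Gval At lam Rg (S.uzeta u) := by
  refine ⟨S.bijOn_Eop_Vsub At hRg, S.bijOn_Eop'_Wsub At hR', S.dzetaL_eq_image At hRg, ?_⟩
  rintro u hu y r ⟨u', hu', hzeta, hy⟩ hrW hr
  have hzeta' : S.uzeta u = S.uzeta u' :=
    (hRg.eopEquiv S.isResolvent_Agaminv).injective (hzeta.trans (S.uzetaL_eq_Eop_uzeta hRg u'))
  rw [S.eq_projW_Eop_of_inner_eq At hRg hR' hy hrW hr, S.Eop_Amax_sub_smul hRg, map_sub,
    S.projW_Amax_eq_of_uzeta_eq At hT hu' hu hzeta'.symm, ← hzeta', sub_eq_add_neg]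
  rfl

theorem statement_12 (S : Setup H) (At : H →ₗ.[ℂ] H)
    (h1 : S.Amin ≤ At) (h2 : At ≤ S.Amax)
    (hcl : IsClosed (At.graph : Set (H × H)))
    (T : H →ₗ.[ℂ] H) (hT : (T.graph : Set (H × H)) = S.Tgraph At)
    (lam : ℂ) (Rg R' : H →L[ℂ] H)
    (hRg : IsResolvent S.Agam lam Rg)
    (hR' : IsResolvent S.Agam.adjoint (starRingEnd ℂ lam) R') :
    Set.BijOn (Eop lam Rg) (S.Vsub At : Set H) (S.VLsub At lam Rg : Set H) ∧
    Set.BijOn (Eop' lam R') (S.Wsub At : Set H) (S.WLsub At lam R' : Set H) ∧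
    S.dzetaL At lam Rg = Eop lam Rg '' S.dzeta At ∧
    ∀ u : S.Amax.domain, (u : H) ∈ At.domain →
      ∀ y r : H, (Eop lam Rg (S.uzeta u), y) ∈ S.TgraphL At lam Rg R' →
        r ∈ S.Wsub At →
        (∀ w : H, w ∈ S.Wsub At →
          (inner ℂ r w : ℂ) = (inner ℂ y (Eop' lam R' w) : ℂ)) →
        r = S.projW At (S.Amax u) + S.Gval At lam Rg (S.uzeta u) :=
  statement_12_general S At T hT lam Rg R' hRg hR'

end GrubbExt
end
end
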